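/- arXiv:math/0701753 — 4 statements merged into one kernel-verified Lean document; each statement's English description precedes it below -/
import Mathlib

section
/- Let T̃ : L^p(ℂⁿ × ℝⁿ) → L^p(ℂⁿ × ℝⁿ) be given by convolution in the last n real variables against a compactly supported kernel: T̃[F](z,t) = ∬ T̃(z,w,t−s) F(w,s) dw ds, where T̃(z,w,u) is a bounded measurable function with compact support satisfying sup_z ∬ |T̃(z,w,u)| dw du ≤ C₁ and sup_w ∬ |T̃(z,w,u)| dz du ≤ C₂. Suppose ‖T̃[F]‖_{L^p} ≤ A_p ‖F‖_{L^p} for all F. Define T(z,w,t) = ∫_{ℝ^{n−1}} T̃(z,w,t−s₂−⋯−s_n, s₂,…,s_n) ds₂⋯ds_n and the operator T[f](z,t) = ∬_{ℂⁿ×ℝ} T(z,w,t−s) f(w,s) dw ds on functions on ℂⁿ × ℝ. Then ‖T[f]‖_{L^p(ℂⁿ×ℝ)} ≤ A_p ‖f‖_{L^p(ℂⁿ×ℝ)}. -/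
open MeasureTheory Filter
open scoped ENNReal Classical Topology

lemma lintegral_shift_prod_indicator {α β : Type*} [MeasureSpace α] [MeasureSpace β]
    [SFinite (volume : Measure α)] [SFinite (volume : Measure β)]
    (h : α × ℝ → ℝ≥0∞) (c : β → ℝ) (hc : Measurable c) (B : Set β) (hB : MeasurableSet B) :
    ∫⁻ x : (α × ℝ) × β, (if x.2 ∈ B then h (x.1.1, x.1.2 + c x.2) else 0)
      = (∫⁻ y, h y) * volume B := by
  have hvol : (volume : Measure ((α × ℝ) × β)) = (volume : Measure (α × ℝ)).prod volume := rfl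
  have htrans : ∀ (v : ℝ) (g : α × ℝ → ℝ≥0∞),
      ∫⁻ y : α × ℝ, g (y.1, y.2 + v) = ∫⁻ y, g y := by
    intro v g
    have hmp : MeasurePreserving (fun y : α × ℝ => (y.1, y.2 + v)) volume volume := by
      have := (MeasurePreserving.id (volume : Measure α)).prod
        (measurePreserving_add_right (volume : Measure ℝ) v)
      exact this
    have hemb : MeasurableEmbedding (fun y : α × ℝ => (y.1, y.2 + v)) := by
      have := (MeasurableEquiv.prodCongr (MeasurableEquiv.refl α)
        (MeasurableEquiv.addRight v)).measurableEmbedding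
      convert this using 1
      exact rfl
    exact hmp.lintegral_comp_emb hemb g
  apply le_antisymm
  · rw [← iSup_lintegral_measurable_le_eq_lintegral]
    refine iSup_le fun g => iSup_le fun hg => iSup_le fun hgle => ?_
    rw [hvol, lintegral_prod_symm _ hg.aemeasurable]
    calc ∫⁻ v, ∫⁻ y : α × ℝ, g (y, v) ∂volume ∂volume
        ≤ ∫⁻ v, (if v ∈ B then ∫⁻ y, h y else 0) ∂volume := by
          refine lintegral_mono fun v => ?_
          by_cases hv : v ∈ B
          · simp only [hv, if_true]
            calc ∫⁻ y : α × ℝ, g (y, v) ≤ ∫⁻ y : α × ℝ, h (y.1, y.2 + c v) := by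
                  refine lintegral_mono fun y => ?_
                  have := hgle (y, v)
                  simpa [hv] using this
              _ = ∫⁻ y, h y := htrans (c v) h
          · simp only [hv, if_false]
            have hz : ∀ y : α × ℝ, g (y, v) = 0 := by
              intro y
              have h0 : g (y, v) ≤ 0 := by simpa [hv] using hgle (y, v)
              exact le_antisymm h0 zero_le
            simp [hz]
      _ = (∫⁻ y, h y) * volume B := by
          rw [← lintegral_indicator_const hB]
          exact lintegral_congr fun v => by simp [Set.indicator_apply]
  · rw [← iSup_lintegral_measurable_le_eq_lintegral h, ENNReal.iSup_mul]
    refine iSup_le fun g => ?_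
    rw [ENNReal.iSup_mul]
    refine iSup_le fun hg => ?_
    rw [ENNReal.iSup_mul]
    refine iSup_le fun hgle => ?_
    have hGmeas : Measurable fun x : (α × ℝ) × β =>
        (if x.2 ∈ B then g (x.1.1, x.1.2 + c x.2) else 0) := by
      refine Measurable.ite (measurable_snd hB) ?_ measurable_const
      exact hg.comp ((measurable_fst.comp measurable_fst).prodMk
        ((measurable_snd.comp measurable_fst).add (hc.comp measurable_snd)))
    have hle : (fun x : (α × ℝ) × β => (if x.2 ∈ B then g (x.1.1, x.1.2 + c x.2) else 0)) ≤
        fun x => (if x.2 ∈ B then h (x.1.1, x.1.2 + c x.2) else 0) := by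
      intro x
      by_cases hv : x.2 ∈ B <;> simp [hv, hgle _]
    calc (∫⁻ y, g y) * volume B
        = ∫⁻ x : (α × ℝ) × β, (if x.2 ∈ B then g (x.1.1, x.1.2 + c x.2) else 0) := by
          rw [hvol, lintegral_prod_symm _ hGmeas.aemeasurable]
          rw [← lintegral_indicator_const hB]
          congr 1 with v
          by_cases hv : v ∈ B
          · simp only [hv, if_true, Set.indicator_apply, if_pos hv]
            exact (htrans (c v) g).symm
          · simp [hv, Set.indicator_apply]
      _ ≤ _ := lintegral_mono hle


/-- Transference: if the multi-parameter convolution operator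
`T̃[F](z,t) = ∬ K(z,w,t−s) F(w,s) dw ds` on `ℂⁿ × ℝⁿ` (with a bounded, compactly supported
kernel having uniformly bounded mixed `L¹` norms) is bounded on `Lᵖ` with norm `Aₚ`, then the
induced operator `T[f](z,t) = ∬ K(z,w,s) f(w, t − s₁ − ⋯ − sₙ) dw ds` on `ℂⁿ × ℝ`
is bounded on `Lᵖ` with the same norm `Aₚ`. -/
theorem stmt_6 (n : ℕ) (hn : 0 < n) (p : ℝ≥0∞) (hp : 1 ≤ p) (hp' : p ≠ ⊤)
    (K : (Fin n → ℂ) → (Fin n → ℂ) → (Fin n → ℝ) → ℂ)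
    (hKmeas : Measurable fun x : ((Fin n → ℂ) × (Fin n → ℂ)) × (Fin n → ℝ) =>
      K x.1.1 x.1.2 x.2)
    (hKsupp : HasCompactSupport fun x : ((Fin n → ℂ) × (Fin n → ℂ)) × (Fin n → ℝ) =>
      K x.1.1 x.1.2 x.2)
    (hKbdd : ∃ M : ℝ, ∀ z w u, ‖K z w u‖ ≤ M)
    (C₁ C₂ : ℝ)
    (hC₁ : ∀ z, (∫ w, ∫ u, ‖K z w u‖) ≤ C₁)
    (hC₂ : ∀ w, (∫ z, ∫ u, ‖K z w u‖) ≤ C₂)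
    (Ap : ℝ≥0∞)
    (hA : ∀ F : (Fin n → ℂ) × (Fin n → ℝ) → ℂ,
      eLpNorm (fun zt : (Fin n → ℂ) × (Fin n → ℝ) =>
          ∫ w, ∫ s, K zt.1 w (zt.2 - s) * F (w, s)) p volume ≤
        Ap * eLpNorm F p volume) :
    ∀ f : (Fin n → ℂ) × ℝ → ℂ,
      eLpNorm (fun zt : (Fin n → ℂ) × ℝ =>
          ∫ w, ∫ s : Fin n → ℝ, K zt.1 w s * f (w, zt.2 - ∑ i, s i)) p volume ≤
        Ap * eLpNorm f p volume := by
  obtain ⟨m, rfl⟩ : ∃ m, n = m + 1 := ⟨n - 1, (Nat.succ_pred_eq_of_pos hn).symm⟩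
  intro f
  by_cases htop : Ap * eLpNorm f p volume = ⊤
  · rw [htop]; exact le_top
  have hp0 : p ≠ 0 := fun h => by simp [h] at hp
  set q := p.toReal with hq_def
  have hq : 0 < q := ENNReal.toReal_pos hp0 hp'
  set g : (Fin (m + 1) → ℂ) × ℝ → ℂ := fun zt =>
    ∫ w, ∫ s : Fin (m + 1) → ℝ, K zt.1 w s * f (w, zt.2 - ∑ i, s i) with hg_def
  -- radius of the support of K in the last variable
  obtain ⟨ρ, hρ0, hρ⟩ : ∃ ρ : ℝ, 0 ≤ ρ ∧ ∀ z w u, K z w u ≠ 0 → ∀ i, |u i| ≤ ρ := by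
    obtain ⟨r, hr⟩ := hKsupp.isBounded.subset_closedBall 0
    refine ⟨max r 0, le_max_right _ _, fun z w u hK i => ?_⟩
    have hx : (((z, w), u) : ((Fin (m+1) → ℂ) × (Fin (m+1) → ℂ)) × (Fin (m+1) → ℝ))
        ∈ tsupport (fun x : ((Fin (m+1) → ℂ) × (Fin (m+1) → ℂ)) × (Fin (m+1) → ℝ) =>
          K x.1.1 x.1.2 x.2) := subset_tsupport _ hK
    have hxr := hr hx
    rw [Metric.mem_closedBall, dist_zero_right] at hxr
    have h2 : ‖u‖ ≤ r :=
      le_trans (norm_snd_le (((z, w), u) :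
        ((Fin (m+1) → ℂ) × (Fin (m+1) → ℂ)) × (Fin (m+1) → ℝ))) hxr
    calc |u i| = ‖u i‖ := (Real.norm_eq_abs _).symm
      _ ≤ ‖u‖ := norm_le_pi_norm u i
      _ ≤ r := h2
      _ ≤ max r 0 := le_max_left _ _
  -- the measure-preserving splitting
  set e : ((Fin (m + 1) → ℂ) × (Fin (m + 1) → ℝ)) ≃ᵐ
      (((Fin (m + 1) → ℂ) × ℝ) × (Fin m → ℝ)) :=
    ((MeasurableEquiv.refl (Fin (m + 1) → ℂ)).prodCongr
      (MeasurableEquiv.piFinSuccAbove (fun _ => ℝ) 0)).trans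
      MeasurableEquiv.prodAssoc.symm with he_def
  have he : MeasurePreserving e volume volume := by
    have h1 : MeasurePreserving ((MeasurableEquiv.refl (Fin (m + 1) → ℂ)).prodCongr
        (MeasurableEquiv.piFinSuccAbove (fun _ : Fin (m + 1) => ℝ) 0)) volume volume := by
      have := (MeasurePreserving.id (volume : Measure (Fin (m + 1) → ℂ))).prod
        (volume_preserving_piFinSuccAbove (fun _ : Fin (m + 1) => ℝ) 0)
      exact this
    have h2 : MeasurePreserving
        (MeasurableEquiv.prodAssoc.symm :
          (Fin (m + 1) → ℂ) × (ℝ × (Fin m → ℝ)) ≃ᵐ _) volume volume :=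
      MeasurePreserving.symm _
        (measurePreserving_prodAssoc volume volume volume)
    exact h2.comp h1
  have he_apply : ∀ (z : Fin (m + 1) → ℂ) (t : Fin (m + 1) → ℝ),
      e (z, t) = ((z, t 0), fun j => t j.succ) := by
    intro z t
    rfl
  -- the cube computation
  have cube : ∀ (R : ℝ) (h : (Fin (m + 1) → ℂ) × ℝ → ℝ≥0∞),
      (∫⁻ x : (Fin (m + 1) → ℂ) × (Fin (m + 1) → ℝ),
        (if (∀ i, i ≠ 0 → |x.2 i| ≤ R) then h (x.1, ∑ i, x.2 i) else 0))
      = (∫⁻ y, h y) * (ENNReal.ofReal (2 * R)) ^ m := by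
    intro R h
    set B : Set (Fin m → ℝ) := {v | ∀ i, |v i| ≤ R} with hB_def
    have hBeq : B = Set.pi Set.univ fun _ : Fin m => Set.Icc (-R) R := by
      ext v
      simp only [hB_def, Set.mem_setOf_eq, Set.mem_univ_pi, Set.mem_Icc, abs_le]
    have hBmeas : MeasurableSet B := by
      rw [hBeq]; exact MeasurableSet.univ_pi fun _ => measurableSet_Icc
    have hBvol : volume B = (ENNReal.ofReal (2 * R)) ^ m := by
      rw [hBeq, volume_pi_pi]
      simp [Real.volume_Icc, two_mul, sub_neg_eq_add]
    have hcmeas : Measurable fun v : Fin m → ℝ => ∑ i, v i :=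
      Finset.univ.measurable_sum fun i _ => measurable_pi_apply i
    calc (∫⁻ x : (Fin (m + 1) → ℂ) × (Fin (m + 1) → ℝ),
          (if (∀ i, i ≠ 0 → |x.2 i| ≤ R) then h (x.1, ∑ i, x.2 i) else 0))
        = ∫⁻ x : (Fin (m + 1) → ℂ) × (Fin (m + 1) → ℝ),
            (fun y : ((Fin (m + 1) → ℂ) × ℝ) × (Fin m → ℝ) =>
              if y.2 ∈ B then h (y.1.1, y.1.2 + ∑ i, y.2 i) else 0) (e x) := by
          refine lintegral_congr fun zt => ?_
          obtain ⟨z, t⟩ := zt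
          rw [he_apply z t]
          simp only [hB_def, Set.mem_setOf_eq]
          by_cases hcond : ∀ i : Fin (m + 1), i ≠ 0 → |t i| ≤ R
          · have hcond' : ∀ j : Fin m, |t j.succ| ≤ R := fun j =>
              hcond _ (Fin.succ_ne_zero j)
            rw [if_pos hcond, if_pos hcond']
            congr 1
            rw [Fin.sum_univ_succ]
          · have hcond' : ¬ ∀ j : Fin m, |t j.succ| ≤ R := by
              intro hc
              refine hcond fun i hi => ?_
              induction i using Fin.cases with
              | zero => exact absurd rfl hi
              | succ j => exact hc j
            rw [if_neg hcond, if_neg hcond']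
      _ = ∫⁻ y : ((Fin (m + 1) → ℂ) × ℝ) × (Fin m → ℝ),
            (if y.2 ∈ B then h (y.1.1, y.1.2 + ∑ i, y.2 i) else 0) :=
          he.lintegral_comp_emb e.measurableEmbedding
            (fun y : ((Fin (m + 1) → ℂ) × ℝ) × (Fin m → ℝ) =>
              if y.2 ∈ B then h (y.1.1, y.1.2 + ∑ i, y.2 i) else 0)
      _ = (∫⁻ y, h y) * volume B := by
          rw [← lintegral_shift_prod_indicator h (fun v => ∑ i, v i) hcmeas B hBmeas]
          exact lintegral_congr fun y => by by_cases hy : y.2 ∈ B <;> simp [hy]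
      _ = _ := by rw [hBvol]
  -- the main estimate, for each k ≥ 1
  have main : ∀ k : ℕ, 1 ≤ k →
      eLpNorm g p volume ≤ Ap * eLpNorm f p volume *
        ENNReal.ofReal (((ρ + k) / k) ^ ((m : ℝ) / q)) := by
    intro k hk
    have hk0 : (0:ℝ) < k := by exact_mod_cast hk
    have h1q : (0:ℝ) ≤ 1 / q := by positivity
    set R : ℝ := ρ + k with hR_def
    have hRpos : (0:ℝ) < R := by positivity
    set F : (Fin (m + 1) → ℂ) × (Fin (m + 1) → ℝ) → ℂ := fun ws =>
      if (∀ i, i ≠ 0 → |ws.2 i| ≤ R) then f (ws.1, ∑ i, ws.2 i) else 0 with hF_def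
    have hFnorm : (∫⁻ ws : (Fin (m+1) → ℂ) × (Fin (m+1) → ℝ), (‖F ws‖₊ : ℝ≥0∞) ^ q)
        = (∫⁻ y : (Fin (m+1) → ℂ) × ℝ, (‖f y‖₊ : ℝ≥0∞) ^ q)
          * (ENNReal.ofReal (2 * R)) ^ m := by
      rw [← cube R (fun y => (‖f y‖₊ : ℝ≥0∞) ^ q)]
      refine lintegral_congr fun ws => ?_
      by_cases hcond : ∀ i : Fin (m+1), i ≠ 0 → |ws.2 i| ≤ R
      · simp only [hF_def, if_pos hcond]
      · simp only [hF_def, if_neg hcond]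
        simp [ENNReal.zero_rpow_of_pos hq]
    have hpt : ∀ (z : Fin (m+1) → ℂ) (t : Fin (m+1) → ℝ),
        (∀ i, i ≠ 0 → |t i| ≤ (k:ℝ)) →
        (∫ w, ∫ s, K z w (t - s) * F (w, s)) = g (z, ∑ i, t i) := by
      intro z t ht
      have inner : ∀ w, (∫ s, K z w (t - s) * F (w, s))
          = ∫ u, K z w u * f (w, (∑ i, t i) - ∑ i, u i) := by
        intro w
        have step1 : (∫ s, K z w (t - s) * F (w, s))
            = ∫ s, (fun u => K z w u * f (w, (∑ i, t i) - ∑ i, u i)) (t - s) := by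
          refine integral_congr_ae (Filter.Eventually.of_forall fun s => ?_)
          simp only
          by_cases hK : K z w (t - s) = 0
          · rw [hK, zero_mul, zero_mul]
          · have hcond : ∀ i : Fin (m+1), i ≠ 0 → |s i| ≤ R := by
              intro i hi
              have h1 : |(t - s) i| ≤ ρ := hρ z w _ hK i
              have h2 : |t i| ≤ (k:ℝ) := ht i hi
              have h3 : s i = t i - (t - s) i := by simp
              rw [h3, hR_def]
              calc |t i - (t - s) i| ≤ |t i| + |(t - s) i| := abs_sub _ _
                _ ≤ k + ρ := add_le_add h2 h1
                _ = ρ + k := add_comm _ _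
            rw [hF_def]
            simp only [if_pos hcond]
            congr 2
            have h4 : ∑ i, (t - s) i = (∑ i, t i) - ∑ i, s i := by
              simp [Finset.sum_sub_distrib]
            rw [h4, sub_sub_cancel]
        rw [step1]
        exact integral_sub_left_eq_self (fun u => K z w u * f (w, (∑ i, t i) - ∑ i, u i)) volume t
      calc (∫ w, ∫ s, K z w (t - s) * F (w, s))
          = ∫ w, ∫ u, K z w u * f (w, (∑ i, t i) - ∑ i, u i) :=
            integral_congr_ae (Filter.Eventually.of_forall inner)
        _ = g (z, ∑ i, t i) := rfl
    have hTge : (∫⁻ y : (Fin (m+1) → ℂ) × ℝ, (‖g y‖₊ : ℝ≥0∞) ^ q)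
          * (ENNReal.ofReal (2 * (k:ℝ))) ^ m
        ≤ ∫⁻ zt : (Fin (m+1) → ℂ) × (Fin (m+1) → ℝ),
            (‖∫ w, ∫ s, K zt.1 w (zt.2 - s) * F (w, s)‖₊ : ℝ≥0∞) ^ q := by
      rw [← cube (k:ℝ) (fun y => (‖g y‖₊ : ℝ≥0∞) ^ q)]
      refine lintegral_mono fun zt => ?_
      show (if (∀ i, i ≠ 0 → |zt.2 i| ≤ (k:ℝ)) then
          ((‖g (zt.1, ∑ i, zt.2 i)‖₊ : ℝ≥0∞)) ^ q else 0)
        ≤ (‖∫ w, ∫ s, K zt.1 w (zt.2 - s) * F (w, s)‖₊ : ℝ≥0∞) ^ q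
      by_cases hcond : ∀ i : Fin (m+1), i ≠ 0 → |zt.2 i| ≤ (k:ℝ)
      · rw [if_pos hcond, ← hpt zt.1 zt.2 hcond]
      · rw [if_neg hcond]; exact zero_le
    have hg_e : eLpNorm g p volume
        = (∫⁻ y : (Fin (m+1) → ℂ) × ℝ, (‖g y‖₊ : ℝ≥0∞) ^ q) ^ (1/q) :=
      eLpNorm_eq_lintegral_rpow_enorm_toReal hp0 hp'
    have hf_e : eLpNorm f p volume
        = (∫⁻ y : (Fin (m+1) → ℂ) × ℝ, (‖f y‖₊ : ℝ≥0∞) ^ q) ^ (1/q) :=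
      eLpNorm_eq_lintegral_rpow_enorm_toReal hp0 hp'
    set b : ℝ≥0∞ := ENNReal.ofReal (2 * R) ^ m with hb_def
    set b' : ℝ≥0∞ := ENNReal.ofReal (2 * (k:ℝ)) ^ m with hb'_def
    have key : eLpNorm g p volume * b' ^ (1/q)
        ≤ Ap * eLpNorm f p volume * b ^ (1/q) := by
      calc eLpNorm g p volume * b' ^ (1/q)
          = ((∫⁻ y : (Fin (m+1) → ℂ) × ℝ, (‖g y‖₊ : ℝ≥0∞) ^ q) * b') ^ (1/q) := by
            rw [hg_e, ENNReal.mul_rpow_of_nonneg _ _ h1q]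
        _ ≤ (∫⁻ zt : (Fin (m+1) → ℂ) × (Fin (m+1) → ℝ),
              (‖∫ w, ∫ s, K zt.1 w (zt.2 - s) * F (w, s)‖₊ : ℝ≥0∞) ^ q) ^ (1/q) :=
            ENNReal.rpow_le_rpow hTge h1q
        _ = eLpNorm (fun zt : (Fin (m+1) → ℂ) × (Fin (m+1) → ℝ) =>
              ∫ w, ∫ s, K zt.1 w (zt.2 - s) * F (w, s)) p volume :=
            (eLpNorm_eq_lintegral_rpow_enorm_toReal (μ := volume)
              (f := fun zt : (Fin (m+1) → ℂ) × (Fin (m+1) → ℝ) =>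
                ∫ w, ∫ s, K zt.1 w (zt.2 - s) * F (w, s)) hp0 hp').symm
        _ ≤ Ap * eLpNorm F p volume := hA F
        _ = Ap * ((∫⁻ y : (Fin (m+1) → ℂ) × ℝ, (‖f y‖₊ : ℝ≥0∞) ^ q) * b) ^ (1/q) := by
            rw [eLpNorm_eq_lintegral_rpow_enorm_toReal hp0 hp']
            exact congrArg (fun x => Ap * x ^ (1/q)) hFnorm
        _ = Ap * eLpNorm f p volume * b ^ (1/q) := by
            rw [ENNReal.mul_rpow_of_nonneg _ _ h1q, hf_e, mul_assoc]
    have h2k : (0:ℝ) < 2 * (k:ℝ) := by positivity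
    have h2R : (0:ℝ) < 2 * R := by positivity
    have hb'ne0 : b' ^ (1/q) ≠ 0 := by
      have : (0:ℝ≥0∞) < b' := ENNReal.pow_pos (ENNReal.ofReal_pos.mpr h2k) m
      exact (ENNReal.rpow_pos this (ENNReal.pow_ne_top ENNReal.ofReal_ne_top)).ne'
    have hb'netop : b' ^ (1/q) ≠ ⊤ :=
      ENNReal.rpow_ne_top_of_nonneg h1q (ENNReal.pow_ne_top ENNReal.ofReal_ne_top)
    have hdiv : eLpNorm g p volume ≤ Ap * eLpNorm f p volume * b ^ (1/q) / b' ^ (1/q) :=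
      (ENNReal.le_div_iff_mul_le (Or.inl hb'ne0) (Or.inl hb'netop)).2 key
    have hcalc : Ap * eLpNorm f p volume * b ^ (1/q) / b' ^ (1/q)
        = Ap * eLpNorm f p volume * ENNReal.ofReal ((R / k) ^ ((m:ℝ) / q)) := by
      rw [mul_div_assoc]
      congr 1
      rw [hb_def, hb'_def, ← ENNReal.ofReal_pow h2R.le, ← ENNReal.ofReal_pow h2k.le,
        ENNReal.ofReal_rpow_of_nonneg (by positivity) h1q,
        ENNReal.ofReal_rpow_of_nonneg (by positivity) h1q,
        ← ENNReal.ofReal_div_of_pos (by positivity)]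
      congr 1
      rw [← Real.rpow_natCast (2 * R) m, ← Real.rpow_natCast (2 * (k:ℝ)) m,
        ← Real.rpow_mul h2R.le, ← Real.rpow_mul h2k.le,
        ← Real.div_rpow (by positivity) (by positivity),
        mul_div_mul_left _ _ (two_ne_zero), mul_one_div]
    calc eLpNorm g p volume ≤ _ := hdiv
      _ = _ := hcalc
  -- pass to the limit
  have hone : Tendsto (fun k : ℕ => ((ρ + k) / k : ℝ)) atTop (𝓝 1) := by
    have h1 : Tendsto (fun k : ℕ => (ρ / k + 1 : ℝ)) atTop (𝓝 (0 + 1)) :=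
      (tendsto_const_div_atTop_nhds_zero_nat ρ).add tendsto_const_nhds
    rw [zero_add] at h1
    refine h1.congr' ?_
    filter_upwards [eventually_ge_atTop 1] with k hk
    have hk' : (k : ℝ) ≠ 0 := by
      exact_mod_cast Nat.one_le_iff_ne_zero.mp hk
    field_simp
  have hone' : Tendsto (fun k : ℕ => ENNReal.ofReal (((ρ + k) / k) ^ ((m : ℝ) / q)))
      atTop (𝓝 1) := by
    have h2 : Tendsto (fun k : ℕ => (((ρ + k) / k) ^ ((m : ℝ) / q) : ℝ)) atTop (𝓝 1) := by
      have := hone.rpow_const (p := (m : ℝ) / q) (Or.inr (by positivity))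
      simpa using this
    have := ENNReal.tendsto_ofReal h2
    simpa using this
  have hlim : Tendsto (fun k : ℕ => Ap * eLpNorm f p volume *
      ENNReal.ofReal (((ρ + k) / k) ^ ((m : ℝ) / q))) atTop
      (𝓝 (Ap * eLpNorm f p volume)) := by
    have := ENNReal.Tendsto.const_mul (a := Ap * eLpNorm f p volume) hone'
      (Or.inr htop)
    simpa using this
  exact ge_of_tendsto hlim (eventually_atTop.2 ⟨1, main⟩)
end

section
/- Let Λ(δ) = ∑_{k=2}^{m} c_k δ^k with c_k ≥ 0, c_m > 0, and let μ be its inverse on [0,∞). Then μ(δ)^{−1} is comparable to ∑_{k=2}^{m} c_k^{1/k} δ^{−1/k} for δ > 0: there are constants A, B > 0 depending only on m such that A ∑_{k=2}^m c_k^{1/k} δ^{−1/k} ≤ μ(δ)^{−1} ≤ B ∑_{k=2}^m c_k^{1/k} δ^{−1/k}. -/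
/-- For `Λ(δ) = ∑_{k=2}^m c_k δᵏ` with inverse `μ`, one has
`μ(δ)⁻¹ ≈ ∑_{k=2}^m c_k^{1/k} δ^{−1/k}` with comparison constants depending only on `m`. -/
theorem stmt_11 (m : ℕ) (hm : 2 ≤ m) :
    ∃ A B : ℝ, 0 < A ∧ 0 < B ∧
      ∀ c : ℕ → ℝ, (∀ k, 0 ≤ c k) → 0 < c m →
        ∀ μ : ℝ → ℝ,
          (∀ δ, 0 ≤ δ → 0 ≤ μ δ ∧ (∑ k ∈ Finset.Icc 2 m, c k * μ δ ^ k) = δ) →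
          ∀ δ : ℝ, 0 < δ →
            A * (∑ k ∈ Finset.Icc 2 m, c k ^ ((k : ℝ)⁻¹) * δ ^ (-(k : ℝ)⁻¹)) ≤ (μ δ)⁻¹ ∧
            (μ δ)⁻¹ ≤ B * ∑ k ∈ Finset.Icc 2 m, c k ^ ((k : ℝ)⁻¹) * δ ^ (-(k : ℝ)⁻¹) := by
  have hM1 : (1:ℝ) ≤ (m:ℝ) - 1 := by
    have : (2:ℝ) ≤ (m:ℝ) := by exact_mod_cast hm
    linarith
  have hMpos : (0:ℝ) < (m:ℝ) - 1 := by linarith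
  refine ⟨((m:ℝ) - 1)⁻¹, (m:ℝ) - 1, by positivity, hMpos, ?_⟩
  intro c hc hcm μ hμ δ hδ
  obtain ⟨ht0, hsum⟩ := hμ δ hδ.le
  set t := μ δ with ht
  -- t > 0
  have htpos : 0 < t := by
    rcases ht0.lt_or_eq with h | h
    · exact h
    · exfalso
      rw [← h] at hsum
      have : (∑ k ∈ Finset.Icc 2 m, c k * (0:ℝ) ^ k) = 0 := by
        apply Finset.sum_eq_zero
        intro k hk
        have hk2 : 2 ≤ k := (Finset.mem_Icc.mp hk).1
        rw [zero_pow (by omega)]; ring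
      rw [this] at hsum
      exact absurd hsum.symm hδ.ne'
  have hterm_nonneg : ∀ k ∈ Finset.Icc 2 m,
      0 ≤ c k ^ ((k : ℝ)⁻¹) * δ ^ (-(k : ℝ)⁻¹) := fun k _ =>
    mul_nonneg (Real.rpow_nonneg (hc k) _) (Real.rpow_nonneg hδ.le _)
  have hsum_nonneg : ∀ k ∈ Finset.Icc 2 m, 0 ≤ c k * t ^ k := fun k _ =>
    mul_nonneg (hc k) (pow_nonneg ht0 k)
  have hcard : (Finset.Icc 2 m).card = m - 1 := by
    rw [Nat.card_Icc]; omega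
  have hcardR : ((Finset.Icc 2 m).card : ℝ) = (m:ℝ) - 1 := by
    rw [hcard]; push_cast [Nat.cast_sub (by omega : 1 ≤ m)]; ring
  -- key identity: (c k * t^k)^(1/k) = c k^(1/k) * t
  have hkey : ∀ k ∈ Finset.Icc 2 m,
      (c k * t ^ k) ^ ((k:ℝ)⁻¹) = c k ^ ((k:ℝ)⁻¹) * t := by
    intro k hk
    have hk2 : 2 ≤ k := (Finset.mem_Icc.mp hk).1
    rw [Real.mul_rpow (hc k) (pow_nonneg ht0 k),
      Real.pow_rpow_inv_natCast ht0 (by omega)]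
  constructor
  · -- lower bound
    have hS : (∑ k ∈ Finset.Icc 2 m, c k ^ ((k : ℝ)⁻¹) * δ ^ (-(k : ℝ)⁻¹))
        ≤ ((m:ℝ) - 1) * t⁻¹ := by
      calc (∑ k ∈ Finset.Icc 2 m, c k ^ ((k : ℝ)⁻¹) * δ ^ (-(k : ℝ)⁻¹))
          ≤ ∑ k ∈ Finset.Icc 2 m, t⁻¹ := by
            apply Finset.sum_le_sum
            intro k hk
            have hk2 : 2 ≤ k := (Finset.mem_Icc.mp hk).1
            have hck : c k * t ^ k ≤ δ := by
              rw [← hsum]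
              exact Finset.single_le_sum hsum_nonneg hk
            have h1 : (c k * t ^ k) ^ ((k:ℝ)⁻¹) ≤ δ ^ ((k:ℝ)⁻¹) :=
              Real.rpow_le_rpow (mul_nonneg (hc k) (pow_nonneg ht0 k)) hck
                (by positivity)
            rw [hkey k hk] at h1
            have hd : (0:ℝ) < δ ^ ((k:ℝ)⁻¹) := Real.rpow_pos_of_pos hδ _
            rw [Real.rpow_neg hδ.le, ← div_eq_mul_inv, ← one_div t,
              div_le_div_iff₀ hd htpos]
            linarith
        _ = ((m:ℝ) - 1) * t⁻¹ := by
            rw [Finset.sum_const, nsmul_eq_mul, hcardR]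
    calc (((m:ℝ)-1)⁻¹) * (∑ k ∈ Finset.Icc 2 m, c k ^ ((k : ℝ)⁻¹) * δ ^ (-(k : ℝ)⁻¹))
        ≤ (((m:ℝ)-1)⁻¹) * (((m:ℝ) - 1) * t⁻¹) := by
          apply mul_le_mul_of_nonneg_left hS (by positivity)
      _ = t⁻¹ := by field_simp
  · -- upper bound
    have hne : (Finset.Icc 2 m).Nonempty := by
      rw [Finset.nonempty_Icc]; omega
    have havg : ∑ k ∈ Finset.Icc 2 m, δ / ((m:ℝ) - 1) ≤ ∑ k ∈ Finset.Icc 2 m, c k * t ^ k := by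
      rw [hsum, Finset.sum_const, nsmul_eq_mul, hcardR]
      rw [mul_div_cancel₀ _ hMpos.ne']
    obtain ⟨k, hk, hk2⟩ := Finset.exists_le_of_sum_le hne havg
    have hkk2 : 2 ≤ k := (Finset.mem_Icc.mp hk).1
    have h1 : (δ / ((m:ℝ) - 1)) ^ ((k:ℝ)⁻¹) ≤ (c k * t ^ k) ^ ((k:ℝ)⁻¹) :=
      Real.rpow_le_rpow (by positivity) hk2 (by positivity)
    rw [hkey k hk, Real.div_rpow hδ.le hMpos.le] at h1
    have hMk : ((m:ℝ) - 1) ^ ((k:ℝ)⁻¹) ≤ (m:ℝ) - 1 := by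
      nth_rewrite 2 [show (m:ℝ) - 1 = ((m:ℝ)-1) ^ (1:ℝ) by rw [Real.rpow_one]]
      apply Real.rpow_le_rpow_of_exponent_le hM1
      rw [inv_le_one_iff₀]
      right
      exact_mod_cast Nat.one_le_iff_ne_zero.mpr (by omega)
    have hd : (0:ℝ) < δ ^ ((k:ℝ)⁻¹) := Real.rpow_pos_of_pos hδ _
    have hMkpos : (0:ℝ) < ((m:ℝ) - 1) ^ ((k:ℝ)⁻¹) := Real.rpow_pos_of_pos hMpos _
    have h2 : δ ^ ((k:ℝ)⁻¹) / ((m:ℝ) - 1) ≤ c k ^ ((k:ℝ)⁻¹) * t := by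
      calc δ ^ ((k:ℝ)⁻¹) / ((m:ℝ) - 1)
          ≤ δ ^ ((k:ℝ)⁻¹) / ((m:ℝ) - 1) ^ ((k:ℝ)⁻¹) :=
            div_le_div_of_nonneg_left hd.le hMkpos hMk
        _ ≤ _ := h1
    -- conclude: t⁻¹ ≤ (m-1) * (c k^(1/k) * δ^(-1/k)) ≤ (m-1) * S
    have h3 : t⁻¹ ≤ ((m:ℝ) - 1) * (c k ^ ((k:ℝ)⁻¹) * δ ^ (-(k:ℝ)⁻¹)) := by
      rw [Real.rpow_neg hδ.le, show ((m:ℝ) - 1) * (c k ^ ((k:ℝ)⁻¹) * (δ ^ ((k:ℝ)⁻¹))⁻¹)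
        = (((m:ℝ) - 1) * c k ^ ((k:ℝ)⁻¹)) / δ ^ ((k:ℝ)⁻¹) by ring,
        ← one_div t, div_le_div_iff₀ htpos hd]
      rw [div_le_iff₀ hMpos] at h2
      nlinarith
    refine h3.trans ?_
    apply mul_le_mul_of_nonneg_left ?_ hMpos.le
    exact Finset.single_le_sum hterm_nonneg hk
end

section
/- Let μ : [0,∞) → [0,∞) be the inverse of a strictly increasing polynomial Λ(t) = ∑_{k=2}^m c_k t^k (c_k ≥ 0, c_m > 0), and let A, B > 0. Then ∫_0^B μ(A+s)^{−2} ds ≤ C · ((A+B)/μ(A+B)²) · log(μ(A+B)/μ(A)) for a constant C depending only on m. -/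
open MeasureTheory intervalIntegral

/-- For `μ` the inverse of a strictly increasing polynomial `Λ(t) = ∑_{k=2}^m c_k tᵏ`
and `A, B > 0`, `∫₀^B μ(A+s)⁻² ds ≤ C ((A+B)/μ(A+B)²) log(μ(A+B)/μ(A))` with `C`
depending only on `m`. -/
theorem stmt_15 (m : ℕ) (hm : 2 ≤ m) :
    ∃ C : ℝ, 0 < C ∧
      ∀ c : ℕ → ℝ, (∀ k, 0 ≤ c k) → 0 < c m →
        ∀ μ : ℝ → ℝ,
          (∀ x, 0 ≤ x → 0 ≤ μ x ∧ (∑ k ∈ Finset.Icc 2 m, c k * μ x ^ k) = x) →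
          ∀ A B : ℝ, 0 < A → 0 < B →
            (∫ s in (0 : ℝ)..B, (μ (A + s) ^ 2)⁻¹) ≤
              C * ((A + B) / μ (A + B) ^ 2) * Real.log (μ (A + B) / μ A) := by
  refine ⟨m, by positivity, ?_⟩
  intro c hc hcm μ hμ A B hA hB
  set L : ℝ → ℝ := fun t => ∑ k ∈ Finset.Icc 2 m, c k * t ^ k with hL
  set L' : ℝ → ℝ := fun t => ∑ k ∈ Finset.Icc 2 m, c k * (k * t ^ (k - 1)) with hL'
  have hmm : m ∈ Finset.Icc 2 m := Finset.mem_Icc.2 ⟨hm, le_rfl⟩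
  -- basic facts about L
  have hL0 : L 0 = 0 := by
    simp only [hL]
    refine Finset.sum_eq_zero fun k hk => ?_
    have : k ≠ 0 := by have := (Finset.mem_Icc.1 hk).1; omega
    simp [zero_pow this]
  have hLnonneg : ∀ t : ℝ, 0 ≤ t → 0 ≤ L t := fun t ht =>
    Finset.sum_nonneg fun k _ => mul_nonneg (hc k) (pow_nonneg ht k)
  have hLmono : StrictMonoOn L (Set.Ici 0) := by
    intro x hx y hy hxy
    refine Finset.sum_lt_sum (fun i hi => ?_) ⟨m, hmm, ?_⟩
    · exact mul_le_mul_of_nonneg_left (pow_le_pow_left₀ hx hxy.le i) (hc i)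
    · exact mul_lt_mul_of_pos_left (pow_lt_pow_left₀ hxy hx (by omega)) hcm
  have hLpos : ∀ t : ℝ, 0 < t → 0 < L t := by
    intro t ht
    calc (0:ℝ) < c m * t ^ m := by positivity
    _ ≤ L t := Finset.single_le_sum (fun k _ => mul_nonneg (hc k) (pow_nonneg ht.le k)) hmm
  -- μ facts
  have hμL : ∀ x : ℝ, 0 ≤ x → L (μ x) = x := fun x hx => (hμ x hx).2
  have hμnonneg : ∀ x : ℝ, 0 ≤ x → 0 ≤ μ x := fun x hx => (hμ x hx).1
  have hμmono : ∀ x y : ℝ, 0 ≤ x → x ≤ y → μ x ≤ μ y := by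
    intro x y hx hxy
    by_contra h
    push_neg at h
    have := hLmono (Set.mem_Ici.2 (hμnonneg y (hx.trans hxy))) (Set.mem_Ici.2 (hμnonneg x hx)) h
    rw [hμL x hx, hμL y (hx.trans hxy)] at this
    exact absurd hxy (not_le.2 this)
  have hμpos : ∀ x : ℝ, 0 < x → 0 < μ x := by
    intro x hx
    rcases (hμnonneg x hx.le).lt_or_eq with h | h
    · exact h
    · exfalso
      have : L (μ x) = x := hμL x hx.le
      rw [← h, hL0] at this
      exact absurd this.symm hx.ne'
  have hinv : ∀ t : ℝ, 0 ≤ t → μ (L t) = t := by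
    intro t ht
    have h1 : 0 ≤ L t := hLnonneg t ht
    exact hLmono.injOn (Set.mem_Ici.2 (hμnonneg _ h1)) (Set.mem_Ici.2 ht) (hμL _ h1)
  -- continuity of μ on positives
  have hμcont : ∀ x : ℝ, 0 < x → ContinuousAt μ x := by
    intro x hx
    refine continuousAt_of_monotoneOn_of_image_mem_nhds (s := Set.Ioi 0)
      (fun u hu v hv huv => hμmono u v (le_of_lt hu) huv) (isOpen_Ioi.mem_nhds hx) ?_
    refine Filter.mem_of_superset (isOpen_Ioi.mem_nhds (hμpos x hx)) ?_
    intro y hy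
    exact ⟨L y, hLpos y hy, hinv y (le_of_lt hy)⟩
  set a := μ A with ha_def
  set b := μ (A + B) with hb_def
  have ha : 0 < a := hμpos A hA
  have hab : a ≤ b := hμmono A (A + B) hA.le (by linarith)
  have hb : 0 < b := lt_of_lt_of_le ha hab
  have huIcc : Set.uIcc a b = Set.Icc a b := Set.uIcc_of_le hab
  -- derivative of L
  have hLderiv : ∀ t : ℝ, HasDerivAt L (L' t) t := by
    intro t
    simpa [hL, hL'] using
      (HasDerivAt.fun_sum (fun k (_ : k ∈ Finset.Icc 2 m) => (hasDerivAt_pow k t).const_mul (c k)))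
  have hL'cont : Continuous L' := by
    simp only [hL']
    exact continuous_finset_sum _ fun k _ => by continuity
  -- substitution
  set g : ℝ → ℝ := fun s => (μ (A + s) ^ 2)⁻¹ with hg_def
  have hsub : (∫ s in (0:ℝ)..B, g s) = ∫ t in a..b, L' t * (t ^ 2)⁻¹ := by
    have hfab : ∀ t ∈ Set.uIcc a b, HasDerivAt (fun t => L t - A) (L' t) t :=
      fun t _ => (hLderiv t).sub_const A
    have himg : ContinuousOn g ((fun t => L t - A) '' Set.uIcc a b) := by
      intro x hx
      obtain ⟨t, ht, rfl⟩ := hx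
      rw [huIcc] at ht
      have ht0 : 0 < t := lt_of_lt_of_le ha ht.1
      have hAx : 0 < A + (L t - A) := by
        have : A ≤ L t := by
          calc A = L a := (hμL A hA.le).symm
          _ ≤ L t := by
            rcases eq_or_lt_of_le ht.1 with h | h
            · rw [h]
            · exact (hLmono (Set.mem_Ici.2 ha.le) (Set.mem_Ici.2 ht0.le) h).le
        linarith
      have hμx : 0 < μ (A + (L t - A)) := hμpos _ hAx
      have : ContinuousAt g (L t - A) := by
        have h1 : ContinuousAt (fun s : ℝ => μ (A + s)) (L t - A) :=
          (hμcont _ hAx).comp (by fun_prop)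
        exact ((h1.pow 2).inv₀ (pow_ne_zero 2 hμx.ne'))
      exact this.continuousWithinAt
    have := integral_comp_smul_deriv' (a := a) (b := b) (f := fun t => L t - A)
      (f' := L') (g := g) hfab hL'cont.continuousOn himg
    have hfa : L a - A = 0 := by rw [ha_def, hμL A hA.le]; ring
    have hfb : L b - A = B := by rw [hb_def, hμL (A + B) (by linarith)]; ring
    simp only [hfa, hfb] at this
    rw [← this]
    refine integral_congr fun t ht => ?_
    rw [huIcc] at ht
    have ht0 : 0 ≤ t := le_trans ha.le ht.1
    have : A + (L t - A) = L t := by ring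
    simp only [smul_eq_mul, Function.comp, hg_def, this, hinv t ht0]
  -- the constant
  set S : ℝ := ∑ k ∈ Finset.Icc 2 m, c k * b ^ (k - 2) with hS_def
  have hSb : S * b ^ 2 = A + B := by
    rw [hS_def, Finset.sum_mul]
    have : ∀ k ∈ Finset.Icc 2 m, c k * b ^ (k - 2) * b ^ 2 = c k * b ^ k := by
      intro k hk
      have h2 : 2 ≤ k := (Finset.mem_Icc.1 hk).1
      rw [mul_assoc, ← pow_add, Nat.sub_add_cancel h2]
    rw [Finset.sum_congr rfl this]
    exact hμL (A + B) (by linarith)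
  have hSeq : S = (A + B) / b ^ 2 := by
    field_simp [hSb]
    exact hSb
  -- pointwise bound
  have hpt : ∀ t ∈ Set.Icc a b, L' t * (t ^ 2)⁻¹ ≤ ((m : ℝ) * S) * t⁻¹ := by
    intro t ht
    have ht0 : 0 < t := lt_of_lt_of_le ha ht.1
    have h1 : L' t ≤ ((m : ℝ) * S) * t := by
      have hterm : ∀ k ∈ Finset.Icc 2 m,
          c k * (k * t ^ (k - 1)) ≤ (m : ℝ) * (c k * b ^ (k - 2)) * t := by
        intro k hk
        obtain ⟨h2, hkm⟩ := Finset.mem_Icc.1 hk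
        have hpow : t ^ (k - 1) = t ^ (k - 2) * t := by
          rw [← pow_succ]
          congr 1
          omega
        rw [hpow]
        have h3 : (k : ℝ) * (c k * t ^ (k - 2)) ≤ (m : ℝ) * (c k * b ^ (k - 2)) := by
          refine mul_le_mul (Nat.cast_le.2 hkm) ?_ (mul_nonneg (hc k) (pow_nonneg ht0.le _)) (Nat.cast_nonneg m)
          exact mul_le_mul_of_nonneg_left (pow_le_pow_left₀ ht0.le ht.2 _) (hc k)
        calc c k * ((k : ℝ) * (t ^ (k - 2) * t)) = ((k : ℝ) * (c k * t ^ (k - 2))) * t := by ring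
        _ ≤ (m : ℝ) * (c k * b ^ (k - 2)) * t := mul_le_mul_of_nonneg_right h3 ht0.le
      calc L' t ≤ ∑ k ∈ Finset.Icc 2 m, (m : ℝ) * (c k * b ^ (k - 2)) * t :=
            Finset.sum_le_sum hterm
      _ = ((m : ℝ) * S) * t := by rw [hS_def, Finset.mul_sum, Finset.sum_mul]
    calc L' t * (t ^ 2)⁻¹ ≤ (((m : ℝ) * S) * t) * (t ^ 2)⁻¹ :=
          mul_le_mul_of_nonneg_right h1 (by positivity)
    _ = ((m : ℝ) * S) * t⁻¹ := by
        field_simp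
  -- integrability
  have hne : ∀ t ∈ Set.uIcc a b, t ≠ 0 := by
    intro t ht
    rw [huIcc] at ht
    exact (lt_of_lt_of_le ha ht.1).ne'
  have hint1 : IntervalIntegrable (fun t => L' t * (t ^ 2)⁻¹) volume a b := by
    apply ContinuousOn.intervalIntegrable
    exact hL'cont.continuousOn.mul (((continuous_pow 2).continuousOn).inv₀
      (fun t ht => pow_ne_zero 2 (hne t ht)))
  have hint2 : IntervalIntegrable (fun t => ((m : ℝ) * S) * t⁻¹) volume a b := by
    apply ContinuousOn.intervalIntegrable
    exact continuousOn_const.mul (continuousOn_inv₀.mono fun t ht => hne t ht)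
  have h0notin : (0 : ℝ) ∉ Set.uIcc a b := by
    rw [huIcc]
    intro h
    exact absurd h.1 (not_le.2 ha)
  calc (∫ s in (0:ℝ)..B, (μ (A + s) ^ 2)⁻¹) = ∫ t in a..b, L' t * (t ^ 2)⁻¹ := hsub
  _ ≤ ∫ t in a..b, ((m : ℝ) * S) * t⁻¹ := integral_mono_on hab hint1 hint2 hpt
  _ = ((m : ℝ) * S) * ∫ t in a..b, t⁻¹ := integral_const_mul _ _
  _ = ((m : ℝ) * S) * Real.log (b / a) := by rw [integral_inv h0notin]
  _ = (m : ℝ) * ((A + B) / b ^ 2) * Real.log (b / a) := by rw [hSeq]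
end

section
/- Let Λ(t) = ∑_{k=2}^m c_k t^k with c_k ≥ 0, c_m > 0, and inverse μ. Define μ^#(δ)² = δ ∫_δ^1 μ(t)² t^{−2} dt for 0 < δ ≤ 1. Then μ(δ)² ≤ C μ^#(δ)² for 0 < δ ≤ 1/2, for a constant C depending only on m. Moreover, if m > 2 then μ^#(δ)² ≤ C' δ^{2/m} for 0 < δ ≤ 1 whenever Λ(1) ≥ 1, with C' depending only on m and Λ. -/
open MeasureTheory

-- auxiliary lemmas
-- μ is monotone on [0,∞)
lemma aux_mono (m : ℕ) (hm : 2 ≤ m) (c : ℕ → ℝ) (hc : ∀ k, 0 ≤ c k) (hcm : 0 < c m)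
    (μ : ℝ → ℝ)
    (hμ : ∀ x, 0 ≤ x → 0 ≤ μ x ∧ (∑ k ∈ Finset.Icc 2 m, c k * μ x ^ k) = x) :
    ∀ x y, 0 ≤ x → x ≤ y → μ x ≤ μ y := by
  intro x y hx hxy
  by_contra h
  push_neg at h
  have hx' := hμ x hx
  have hy' := hμ y (hx.trans hxy)
  have hlt : (∑ k ∈ Finset.Icc 2 m, c k * μ y ^ k) < ∑ k ∈ Finset.Icc 2 m, c k * μ x ^ k := by
    apply Finset.sum_lt_sum
    · intro k hk
      exact mul_le_mul_of_nonneg_left (pow_le_pow_left₀ hy'.1 h.le k) (hc k)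
    · exact ⟨m, Finset.mem_Icc.mpr ⟨hm, le_rfl⟩,
        mul_lt_mul_of_pos_left (pow_lt_pow_left₀ h hy'.1 (by omega)) hcm⟩
  rw [hx'.2, hy'.2] at hlt
  exact absurd hxy (not_le.mpr hlt)

-- integrability of the integrand on (δ, 1]
lemma aux_int (m : ℕ) (hm : 2 ≤ m) (c : ℕ → ℝ) (hc : ∀ k, 0 ≤ c k) (hcm : 0 < c m)
    (μ : ℝ → ℝ)
    (hμ : ∀ x, 0 ≤ x → 0 ≤ μ x ∧ (∑ k ∈ Finset.Icc 2 m, c k * μ x ^ k) = x)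
    (δ : ℝ) (hδ : 0 < δ) :
    IntegrableOn (fun t => μ t ^ 2 / t ^ 2) (Set.Ioc δ 1) := by
  have hmono := aux_mono m hm c hc hcm μ hμ
  set ν : ℝ → ℝ := fun t => μ (max t 0) with hν
  have hνmono : Monotone ν := fun a b hab =>
    hmono _ _ (le_max_right a 0) (max_le_max hab le_rfl)
  have hνmeas : Measurable ν := hνmono.measurable
  have hg : IntegrableOn (fun t => ν t ^ 2 / t ^ 2) (Set.Ioc δ 1) := by
    apply Integrable.mono' (g := fun _ => ν 1 ^ 2 / δ ^ 2)
    · exact integrableOn_const measure_Ioc_lt_top.ne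
    · exact ((hνmeas.pow_const 2).div (measurable_id.pow_const 2)).aestronglyMeasurable
    · filter_upwards [ae_restrict_mem measurableSet_Ioc] with t ht
      rw [Real.norm_eq_abs, abs_div, abs_of_nonneg (sq_nonneg _), abs_of_nonneg (sq_nonneg _)]
      have ht0 : (0:ℝ) < t := hδ.trans ht.1
      have h1 : ν t ^ 2 ≤ ν 1 ^ 2 := by
        have := hνmono ht.2
        have hn : 0 ≤ ν t := (hμ _ (le_max_right _ _)).1
        exact pow_le_pow_left₀ hn this 2
      have h2 : δ ^ 2 ≤ t ^ 2 := pow_le_pow_left₀ hδ.le ht.1.le 2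
      exact div_le_div₀ (by positivity) h1 (by positivity) h2
  apply hg.congr_fun ?_ measurableSet_Ioc
  intro t ht
  simp [hν, max_eq_left (hδ.trans ht.1).le]

/-- With `μ` the inverse of `Λ(t) = ∑_{k=2}^m c_k tᵏ` and
`μ^#(δ)² = δ ∫_δ^1 μ(t)² t⁻² dt`: (i) `μ(δ)² ≤ C μ^#(δ)²` for `0 < δ ≤ 1/2` with `C`
depending only on `m`; (ii) if `m > 2` and `Λ(1) ≥ 1` then `μ^#(δ)² ≤ C' δ^{2/m}`
for `0 < δ ≤ 1`, with `C'` depending only on `m` and `Λ`. -/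
theorem stmt_17 (m : ℕ) (hm : 2 ≤ m) :
    (∃ C : ℝ, 0 < C ∧
      ∀ c : ℕ → ℝ, (∀ k, 0 ≤ c k) → 0 < c m →
        ∀ μ : ℝ → ℝ,
          (∀ x, 0 ≤ x → 0 ≤ μ x ∧ (∑ k ∈ Finset.Icc 2 m, c k * μ x ^ k) = x) →
          ∀ δ : ℝ, 0 < δ → δ ≤ 1 / 2 →
            μ δ ^ 2 ≤ C * (δ * ∫ t in Set.Ioc δ 1, μ t ^ 2 / t ^ 2)) ∧
    (2 < m →
      ∀ c : ℕ → ℝ, (∀ k, 0 ≤ c k) → 0 < c m →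
        (1 ≤ ∑ k ∈ Finset.Icc 2 m, c k * (1 : ℝ) ^ k) →
        ∀ μ : ℝ → ℝ,
          (∀ x, 0 ≤ x → 0 ≤ μ x ∧ (∑ k ∈ Finset.Icc 2 m, c k * μ x ^ k) = x) →
          ∃ C' : ℝ, 0 < C' ∧
            ∀ δ : ℝ, 0 < δ → δ ≤ 1 →
              (δ * ∫ t in Set.Ioc δ 1, μ t ^ 2 / t ^ 2) ≤ C' * δ ^ ((2 : ℝ) / m)) := by
  constructor
  · refine ⟨4, by norm_num, ?_⟩
    intro c hc hcm μ hμ δ hδ hδ2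
    have hmono := aux_mono m hm c hc hcm μ hμ
    have hint := aux_int m hm c hc hcm μ hμ δ hδ
    have hsub : Set.Ioc δ (2*δ) ⊆ Set.Ioc δ 1 :=
      Set.Ioc_subset_Ioc le_rfl (by linarith)
    have stepA : ∫ t in Set.Ioc δ (2*δ), (μ δ ^ 2 / (4 * δ ^ 2))
        ≤ ∫ t in Set.Ioc δ (2*δ), μ t ^ 2 / t ^ 2 := by
      apply setIntegral_mono_on
      · exact integrableOn_const measure_Ioc_lt_top.ne
      · exact hint.mono_set hsub
      · exact measurableSet_Ioc
      · intro t ht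
        have ht0 : (0:ℝ) < t := hδ.trans ht.1
        have h1 : μ δ ^ 2 ≤ μ t ^ 2 :=
          pow_le_pow_left₀ (hμ δ hδ.le).1 (hmono δ t hδ.le ht.1.le) 2
        have h2 : t ^ 2 ≤ 4 * δ ^ 2 := by nlinarith [ht.2, ht0.le]
        exact div_le_div₀ (sq_nonneg _) h1 (by positivity) h2
    have stepB : ∫ t in Set.Ioc δ (2*δ), (μ δ ^ 2 / (4 * δ ^ 2))
        = δ * (μ δ ^ 2 / (4 * δ ^ 2)) := by
      rw [setIntegral_const, Real.volume_real_Ioc_of_le (by linarith), smul_eq_mul]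
      ring_nf
    have stepC : ∫ t in Set.Ioc δ (2*δ), μ t ^ 2 / t ^ 2
        ≤ ∫ t in Set.Ioc δ 1, μ t ^ 2 / t ^ 2 := by
      apply setIntegral_mono_set hint
      · exact Filter.Eventually.of_forall fun t => div_nonneg (sq_nonneg _) (sq_nonneg _)
      · exact HasSubset.Subset.eventuallyLE hsub
    have key : δ * (μ δ ^ 2 / (4 * δ ^ 2)) ≤ ∫ t in Set.Ioc δ 1, μ t ^ 2 / t ^ 2 := by
      rw [← stepB]; exact stepA.trans stepC
    calc μ δ ^ 2 = 4 * (δ * (δ * (μ δ ^ 2 / (4 * δ ^ 2)))) := by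
          field_simp
      _ ≤ 4 * (δ * ∫ t in Set.Ioc δ 1, μ t ^ 2 / t ^ 2) := by gcongr
  ·
      intro hm2 c hc hcm _hΛ1 μ hμ
      have hm0 : (0:ℝ) < m := by positivity
      have hmR : (2:ℝ) < m := by exact_mod_cast hm2
      set d : ℝ := 1 - 2 / m with hd
      have hd0 : 0 < d := by
        rw [hd, sub_pos, div_lt_one hm0]; exact hmR
      set K : ℝ := (c m ^ ((2:ℝ)/m))⁻¹ with hK
      have hK0 : 0 < K := by positivity
      refine ⟨K / d, by positivity, ?_⟩
      intro δ hδ hδ1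
      set q : ℝ := 2 / m - 2 with hq
      have hq1 : q + 1 = -d := by rw [hq, hd]; ring
      -- pointwise bound
      have hpt : ∀ t ∈ Set.Ioc δ 1, μ t ^ 2 / t ^ 2 ≤ K * t ^ q := by
        intro t ht
        have ht0 : (0:ℝ) < t := hδ.trans ht.1
        obtain ⟨hμ0, hμΛ⟩ := hμ t ht0.le
        have hsum : c m * μ t ^ m ≤ t :=
          calc c m * μ t ^ m ≤ ∑ k ∈ Finset.Icc 2 m, c k * μ t ^ k :=
                Finset.single_le_sum
                  (fun k _ => mul_nonneg (hc k) (pow_nonneg hμ0 k))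
                  (Finset.mem_Icc.mpr ⟨hm, le_rfl⟩)
            _ = t := hμΛ
        have hpow : μ t ^ m ≤ t / c m := (le_div_iff₀' hcm).mpr hsum
        have hmu : μ t ≤ (t / c m) ^ ((1:ℝ)/m) := by
          have heq : μ t = (μ t ^ (m:ℕ) : ℝ) ^ ((1:ℝ)/m) := by
            rw [← Real.rpow_natCast (μ t) m, ← Real.rpow_mul hμ0, mul_one_div,
              div_self (by positivity : (m:ℝ) ≠ 0), Real.rpow_one]
          rw [heq]
          exact Real.rpow_le_rpow (pow_nonneg hμ0 m) hpow (by positivity)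
        have hmu2 : μ t ^ 2 ≤ (t / c m) ^ ((2:ℝ)/m) := by
          calc μ t ^ 2 ≤ ((t / c m) ^ ((1:ℝ)/m)) ^ 2 := pow_le_pow_left₀ hμ0 hmu 2
            _ = (t / c m) ^ ((2:ℝ)/m) := by
                rw [← Real.rpow_natCast ((t / c m) ^ ((1:ℝ)/m)) 2,
                  ← Real.rpow_mul (by positivity)]
                norm_num
                ring_nf
        have h2 : t ^ (2:ℕ) = t ^ ((2:ℝ)) := by
          rw [show ((2:ℝ)) = ((2:ℕ):ℝ) by norm_num, Real.rpow_natCast]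
        have hrw : (t / c m) ^ ((2:ℝ)/m) / t ^ 2 = K * t ^ q := by
          rw [Real.div_rpow ht0.le hcm.le, hK, hq, h2, Real.rpow_sub ht0]
          ring
        calc μ t ^ 2 / t ^ 2 ≤ (t / c m) ^ ((2:ℝ)/m) / t ^ 2 :=
              div_le_div₀ (by positivity) hmu2 (by positivity) le_rfl
          _ = K * t ^ q := hrw
      -- integrability of the majorant
      have h0not : (0:ℝ) ∉ Set.uIcc δ 1 := by
        rw [Set.uIcc_of_le hδ1]
        exact fun h => absurd h.1 (not_le.mpr hδ)
      have hgint : IntegrableOn (fun t => K * t ^ q) (Set.Ioc δ 1) := by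
        have h : IntervalIntegrable (fun t : ℝ => t ^ q) volume δ 1 :=
          intervalIntegral.intervalIntegrable_rpow (Or.inr h0not)
        exact h.1.const_mul K
      have hf := aux_int m hm c hc hcm μ hμ δ hδ
      have hIle : (∫ t in Set.Ioc δ 1, μ t ^ 2 / t ^ 2) ≤ ∫ t in Set.Ioc δ 1, K * t ^ q :=
        setIntegral_mono_on hf hgint measurableSet_Ioc hpt
      have hqne : q ≠ -1 := by
        intro h
        rw [h] at hq1
        simp at hq1
        linarith
      have hcalc : (∫ t in Set.Ioc δ 1, K * t ^ q) = K * ((1 - δ ^ (q+1)) / (q+1)) := by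
        rw [← intervalIntegral.integral_of_le hδ1, intervalIntegral.integral_const_mul,
          integral_rpow (Or.inr ⟨hqne, h0not⟩), Real.one_rpow]
      have hbound2 : (1 - δ ^ (q+1)) / (q+1) ≤ δ ^ (q+1) / d := by
        generalize δ ^ (q+1) = x
        rw [hq1, div_neg, ← neg_div, neg_sub]
        gcongr
        linarith
      have h6 : (∫ t in Set.Ioc δ 1, μ t ^ 2 / t ^ 2) ≤ K * (δ ^ (q+1) / d) := by
        rw [hcalc] at hIle
        exact hIle.trans (mul_le_mul_of_nonneg_left hbound2 hK0.le)
      have h7 : δ * δ ^ (q+1) = δ ^ ((2:ℝ)/m) := by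
        rw [show δ * δ ^ (q+1) = δ ^ (1:ℝ) * δ ^ (q+1) by rw [Real.rpow_one],
          ← Real.rpow_add hδ]
        congr 1
        rw [hq]; ring
      calc δ * ∫ t in Set.Ioc δ 1, μ t ^ 2 / t ^ 2 ≤ δ * (K * (δ ^ (q+1) / d)) :=
            mul_le_mul_of_nonneg_left h6 hδ.le
        _ = K / d * (δ * δ ^ (q+1)) := by ring
        _ = K / d * δ ^ ((2:ℝ)/m) := by rw [h7]
end
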